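/- Abstraction soundness for constrained reachability (until): let (S, P) be a finite DTMC, h : S → Ŝ a surjective abstraction function, and C, B ⊆ S h-saturated sets with Ĉ = h(C) and B̂ = h(B). Let minuntil and maxuntil be the until value-iteration sequences of the induced abstract MDP with avoid set Ĉ and target B̂. Then for every n ∈ ℕ and every s ∈ S, minuntil n (h s) ≤ until n s ≤ maxuntil n (h s); consequently, ⨆ₙ minuntil n (h s) ≤ PUntil s ≤ ⨆ₙ maxuntil n (h s). -/

import Mathlib

open scoped Classical

/-- Concretization of an abstract state: `γ(t) = h⁻¹({t})`, as a finset. -/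
noncomputable def gammaSet {S T : Type*} [Fintype S] (h : S → T) (t : T) : Finset S :=
  Finset.univ.filter fun s => h s = t

/-- The concretization of every abstract state is nonempty when `h` is surjective. -/
theorem gammaSet_nonempty {S T : Type*} [Fintype S] (h : S → T)
    (hsurj : Function.Surjective h) (t : T) : (gammaSet h t).Nonempty := by
  obtain ⟨s, hs⟩ := hsurj t
  exact ⟨s, by simp [gammaSet, hs]⟩

/-- Abstract transition function of the induced abstract MDP:
`P̂ ŝ α ŝ' = ∑_{s' ∈ γ(ŝ')} P α s'`. -/
noncomputable def absP {S T : Type*} [Fintype S] (P : S → S → ℝ) (h : S → T)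
    (α : S) (t' : T) : ℝ :=
  ∑ s' ∈ gammaSet h t', P α s'

/-- Minimum until value iteration of the induced abstract MDP with avoid set `Ch`
and target set `Bh`. -/
noncomputable def absMinUntil {S T : Type*} [Fintype S] [Fintype T]
    (P : S → S → ℝ) (h : S → T) (hsurj : Function.Surjective h) (Ch Bh : Set T) :
    ℕ → T → ℝ
  | 0, t => if t ∈ Bh then 1 else 0
  | n + 1, t =>
      if t ∈ Bh then 1
      else if t ∈ Ch then 0
      else (gammaSet h t).inf' (gammaSet_nonempty h hsurj t) fun α =>
        ∑ t' : T, absP P h α t' * absMinUntil P h hsurj Ch Bh n t'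

/-- Maximum until value iteration of the induced abstract MDP with avoid set `Ch`
and target set `Bh`. -/
noncomputable def absMaxUntil {S T : Type*} [Fintype S] [Fintype T]
    (P : S → S → ℝ) (h : S → T) (hsurj : Function.Surjective h) (Ch Bh : Set T) :
    ℕ → T → ℝ
  | 0, t => if t ∈ Bh then 1 else 0
  | n + 1, t =>
      if t ∈ Bh then 1
      else if t ∈ Ch then 0
      else (gammaSet h t).sup' (gammaSet_nonempty h hsurj t) fun α =>
        ∑ t' : T, absP P h α t' * absMaxUntil P h hsurj Ch Bh n t'

/-- n-step constrained reachability values for the until property ¬C U B in the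
concrete DTMC. -/
noncomputable def untilN {S : Type*} [Fintype S] (P : S → S → ℝ) (C B : Set S) :
    ℕ → S → ℝ
  | 0, s => if s ∈ B then 1 else 0
  | n + 1, s =>
      if s ∈ B then 1 else if s ∈ C then 0 else ∑ s' : S, P s s' * untilN P C B n s'

/-!
Since `B` and `C` are saturated, the target and avoid tests at `s` and at `h s` agree. Otherwise
lumping the successors of `s` by their class gives
`∑ ŝ', P̂ (h s) s ŝ' * v ŝ' = ∑ s', P s s' * v (h s')` for any abstract value vector `v`, and `s` is one of the actions enabled
at `h s`, so one abstract min-step (max-step) stays below (above) the concrete step.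
Induction on `n` gives the bounds for every `n`. For the suprema, every sequence involved is
bounded by `1` because `P` is stochastic.
-/

open Finset

theorem mem_image_iff_of_saturated {S T : Type*} {h : S → T} {X : Set S}
    (hX : X = h ⁻¹' (h '' X)) (s : S) : h s ∈ h '' X ↔ s ∈ X :=
  (Set.ext_iff.mp hX s).symm

theorem mem_gammaSet {S T : Type*} [Fintype S] {h : S → T} {t : T} {s : S} :
    s ∈ gammaSet h t ↔ h s = t := by
  simp [gammaSet]

theorem sum_absP_mul {S T : Type*} [Fintype S] [Fintype T] (P : S → S → ℝ) (h : S → T)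
    (α : S) (v : T → ℝ) :
    ∑ t, absP P h α t * v t = ∑ s, P α s * v (h s) := by
  rw [← sum_fiberwise univ h (fun s => P α s * v (h s))]
  refine sum_congr rfl fun t _ => ?_
  rw [absP, sum_mul]
  exact sum_congr rfl fun s hs => by rw [mem_gammaSet.mp hs]

theorem sum_mul_le_one_of_le_one {S : Type*} [Fintype S] {p g : S → ℝ}
    (hp : ∀ s, 0 ≤ p s) (hsum : ∑ s, p s = 1) (hg : ∀ s, g s ≤ 1) :
    ∑ s, p s * g s ≤ 1 :=
  calc ∑ s, p s * g s ≤ ∑ s, p s * 1 :=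
        sum_le_sum fun s _ => mul_le_mul_of_nonneg_left (hg s) (hp s)
    _ = 1 := by simpa using hsum

section

variable {S T : Type*} [Fintype S] [Fintype T] (P : S → S → ℝ)
  (hP : ∀ s s', 0 ≤ P s s') (hsum : ∀ s, ∑ s', P s s' = 1)

include hP hsum in
theorem untilN_le_one (C B : Set S) (n : ℕ) (s : S) : untilN P C B n s ≤ 1 := by
  induction n generalizing s with
  | zero => simp only [untilN]; split_ifs <;> norm_num
  | succ n ih =>
    simp only [untilN]
    split_ifs
    exacts [le_rfl, zero_le_one, sum_mul_le_one_of_le_one (hP s) (hsum s) ih]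

include hP hsum in
theorem absMaxUntil_le_one (h : S → T) (hsurj : Function.Surjective h) (Ch Bh : Set T)
    (n : ℕ) (t : T) : absMaxUntil P h hsurj Ch Bh n t ≤ 1 := by
  induction n generalizing t with
  | zero => simp only [absMaxUntil]; split_ifs <;> norm_num
  | succ n ih =>
    simp only [absMaxUntil]
    split_ifs
    · exact le_rfl
    · exact zero_le_one
    · refine sup'_le _ _ fun α _ => ?_
      rw [sum_absP_mul]
      exact sum_mul_le_one_of_le_one (hP α) (hsum α) fun s => ih (h s)

variable {P} {h : S → T} (hsurj : Function.Surjective h) {C B : Set S}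
  (hsatC : C = h ⁻¹' (h '' C)) (hsatB : B = h ⁻¹' (h '' B))

include hP hsatC hsatB in
theorem absMinUntil_le_untilN (n : ℕ) (s : S) :
    absMinUntil P h hsurj (h '' C) (h '' B) n (h s) ≤ untilN P C B n s := by
  induction n generalizing s with
  | zero => simp [absMinUntil, untilN, mem_image_iff_of_saturated hsatB]
  | succ n ih =>
    simp only [absMinUntil, untilN, mem_image_iff_of_saturated hsatB,
      mem_image_iff_of_saturated hsatC]
    split_ifs
    · exact le_rfl
    · exact le_rfl
    · calc _ ≤ ∑ t, absP P h s t * absMinUntil P h hsurj (h '' C) (h '' B) n t :=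
            inf'_le (fun α => ∑ t, absP P h α t *
              absMinUntil P h hsurj (h '' C) (h '' B) n t) (mem_gammaSet.mpr rfl)
        _ = ∑ s', P s s' * absMinUntil P h hsurj (h '' C) (h '' B) n (h s') :=
            sum_absP_mul P h s _
        _ ≤ ∑ s', P s s' * untilN P C B n s' :=
            sum_le_sum fun s' _ => mul_le_mul_of_nonneg_left (ih s') (hP s s')

include hP hsatC hsatB in
theorem untilN_le_absMaxUntil (n : ℕ) (s : S) :
    untilN P C B n s ≤ absMaxUntil P h hsurj (h '' C) (h '' B) n (h s) := by
  induction n generalizing s with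
  | zero => simp [absMaxUntil, untilN, mem_image_iff_of_saturated hsatB]
  | succ n ih =>
    simp only [absMaxUntil, untilN, mem_image_iff_of_saturated hsatB,
      mem_image_iff_of_saturated hsatC]
    split_ifs
    · exact le_rfl
    · exact le_rfl
    · calc ∑ s', P s s' * untilN P C B n s'
          ≤ ∑ s', P s s' * absMaxUntil P h hsurj (h '' C) (h '' B) n (h s') :=
            sum_le_sum fun s' _ => mul_le_mul_of_nonneg_left (ih s') (hP s s')
        _ = ∑ t, absP P h s t * absMaxUntil P h hsurj (h '' C) (h '' B) n t :=
            (sum_absP_mul P h s _).symm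
        _ ≤ _ := le_sup' (fun α => ∑ t, absP P h α t *
            absMaxUntil P h hsurj (h '' C) (h '' B) n t) (mem_gammaSet.mpr rfl)

end

theorem abstraction_sound_until_general {S T : Type*}
    [Fintype S] [Fintype T]
    (P : S → S → ℝ)
    (hP : ∀ s s' : S, 0 ≤ P s s')
    (hsum : ∀ s : S, ∑ s' : S, P s s' = 1)
    (h : S → T) (hsurj : Function.Surjective h)
    (C B : Set S) (hsatC : C = h ⁻¹' (h '' C)) (hsatB : B = h ⁻¹' (h '' B)) :
    (∀ (n : ℕ) (s : S),
        absMinUntil P h hsurj (h '' C) (h '' B) n (h s) ≤ untilN P C B n s ∧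
        untilN P C B n s ≤ absMaxUntil P h hsurj (h '' C) (h '' B) n (h s)) ∧
    (∀ s : S,
        (⨆ n : ℕ, absMinUntil P h hsurj (h '' C) (h '' B) n (h s)) ≤
            (⨆ n : ℕ, untilN P C B n s) ∧
        (⨆ n : ℕ, untilN P C B n s) ≤
            ⨆ n : ℕ, absMaxUntil P h hsurj (h '' C) (h '' B) n (h s)) := by
  have lower := absMinUntil_le_untilN hP hsurj hsatC hsatB
  have upper := untilN_le_absMaxUntil hP hsurj hsatC hsatB
  refine ⟨fun n s => ⟨lower n s, upper n s⟩, fun s => ⟨?_, ?_⟩⟩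
  · exact ciSup_mono ⟨1, Set.forall_mem_range.2 (untilN_le_one P hP hsum C B · s)⟩
      (lower · s)
  · exact ciSup_mono ⟨1, Set.forall_mem_range.2
      (absMaxUntil_le_one P hP hsum h hsurj _ _ · (h s))⟩ (upper · s)

/-- Abstraction soundness for constrained reachability (until): let
(S, P) be a finite DTMC, h : S → Ŝ a surjective abstraction function, and
C, B ⊆ S h-saturated sets with Ĉ = h(C) and B̂ = h(B). Then for every n and every
concrete state s, `minuntil n (h s) ≤ until n s ≤ maxuntil n (h s)`; consequently
`⨆ₙ minuntil n (h s) ≤ PUntil s ≤ ⨆ₙ maxuntil n (h s)`. -/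
theorem abstraction_sound_until {S T : Type*}
    [Fintype S] [Nonempty S] [Fintype T]
    (P : S → S → ℝ)
    (hP : ∀ s s' : S, 0 ≤ P s s')
    (hsum : ∀ s : S, ∑ s' : S, P s s' = 1)
    (h : S → T) (hsurj : Function.Surjective h)
    (C B : Set S) (hsatC : C = h ⁻¹' (h '' C)) (hsatB : B = h ⁻¹' (h '' B)) :
    (∀ (n : ℕ) (s : S),
        absMinUntil P h hsurj (h '' C) (h '' B) n (h s) ≤ untilN P C B n s ∧
        untilN P C B n s ≤ absMaxUntil P h hsurj (h '' C) (h '' B) n (h s)) ∧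
    (∀ s : S,
        (⨆ n : ℕ, absMinUntil P h hsurj (h '' C) (h '' B) n (h s)) ≤
            (⨆ n : ℕ, untilN P C B n s) ∧
        (⨆ n : ℕ, untilN P C B n s) ≤
            ⨆ n : ℕ, absMaxUntil P h hsurj (h '' C) (h '' B) n (h s)) :=
  abstraction_sound_until_general P hP hsum h hsurj C B hsatC hsatB
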